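/- Let d be the derivation on djF = ℤ[b₂,b₃,b₄,b₈,h₁]/(2h₁, b₃h₁, 4b₈+b₄²−b₂b₃²) with d(b₂) = h₁³ and d = 0 on the other generators. Then for all m, n ≥ 0, d(b₂^{2m+1} b₈^n) = b₂^{2m} b₈^n h₁³, and this element is nonzero in djF; in particular b₂^{2m+1} b₈^n is not in the kernel of d. -/

import Mathlib

open MvPolynomial

/-- The ideal `(2h₁, b₃h₁, 4b₈ + b₄² − b₂b₃²)` in `ℤ[h₁,b₂,b₃,b₄,b₈]`, where
`h₁ = X 0`, `b₂ = X 1`, `b₃ = X 2`, `b₄ = X 3`, `b₈ = X 4`. -/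
noncomputable def djFIdeal : Ideal (MvPolynomial (Fin 5) ℤ) :=
  Ideal.span {2 * X 0, X 2 * X 0, 4 * X 4 + (X 3) ^ 2 - X 1 * (X 2) ^ 2}

/-- The ring of derived weak Jacobi forms
`djF = ℤ[b₂,b₃,b₄,b₈,h₁]/(2h₁, b₃h₁, 4b₈ + b₄² − b₂b₃²)`. -/
noncomputable abbrev djF : Type := MvPolynomial (Fin 5) ℤ ⧸ djFIdeal

noncomputable def h1 : djF := Ideal.Quotient.mk djFIdeal (X 0)
noncomputable def b2 : djF := Ideal.Quotient.mk djFIdeal (X 1)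
noncomputable def b3 : djF := Ideal.Quotient.mk djFIdeal (X 2)
noncomputable def b4 : djF := Ideal.Quotient.mk djFIdeal (X 3)
noncomputable def b8 : djF := Ideal.Quotient.mk djFIdeal (X 4)

/-- The quotient map to `(ℤ/2)[h₁, b₂, b₈]` killing `b₃, b₄`. -/
noncomputable def djFquot : djF →+* MvPolynomial (Fin 3) (ZMod 2) :=
  Ideal.Quotient.lift djFIdeal
    (eval₂Hom (Int.castRingHom _) ![X 0, X 1, 0, 0, X 2])
    (by
      intro a ha
      suffices h : djFIdeal ≤ RingHom.ker
          (eval₂Hom (Int.castRingHom (MvPolynomial (Fin 3) (ZMod 2))) ![X 0, X 1, 0, 0, X 2]) from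
        h ha
      rw [djFIdeal, Ideal.span_le]
      have h2 : (2 : MvPolynomial (Fin 3) (ZMod 2)) = 0 := CharTwo.two_eq_zero
      rintro x (rfl | rfl | rfl) <;>
      · show _ ∈ RingHom.ker _
        simp only [RingHom.mem_ker, map_mul, map_add, map_sub, map_pow,
          map_ofNat, eval₂Hom_X', Matrix.cons_val_zero, Matrix.cons_val_one,
          Matrix.head_cons, Matrix.cons_val_two, Matrix.tail_cons,
          Matrix.cons_val_three, Matrix.cons_val_four]
        first
        | rfl
        | simp [h2, show (4 : MvPolynomial (Fin 3) (ZMod 2)) = 0 by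
            rw [show (4 : MvPolynomial (Fin 3) (ZMod 2)) = 2 * 2 by norm_num, h2, mul_zero]])

lemma two_h1 : (2 : djF) * h1 = 0 := by
  rw [h1, show (2 : djF) = Ideal.Quotient.mk djFIdeal 2 from rfl, ← map_mul,
    Ideal.Quotient.eq_zero_iff_mem]
  exact Ideal.subset_span (Set.mem_insert _ _)

set_option synthInstance.maxHeartbeats 1000000 in
/-- For the derivation `d` on `djF` with `d(b₂) = h₁³` and `d = 0` on the other
generators: for all `m, n ≥ 0`, `d(b₂^(2m+1) b₈^n) = b₂^(2m) b₈^n h₁³`, and this element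
is nonzero; in particular `b₂^(2m+1) b₈^n ∉ ker d`. -/
theorem stmt15 (d : Derivation ℤ djF djF)
    (hb2 : d b2 = h1 ^ 3) (hb3 : d b3 = 0) (hb4 : d b4 = 0) (hb8 : d b8 = 0)
    (hh1 : d h1 = 0) :
    ∀ m n : ℕ,
      d (b2 ^ (2 * m + 1) * b8 ^ n) = b2 ^ (2 * m) * b8 ^ n * h1 ^ 3 ∧
      b2 ^ (2 * m) * b8 ^ n * h1 ^ 3 ≠ 0 := by
  intro m n
  constructor
  · rw [Derivation.leibniz, Derivation.leibniz_pow, Derivation.leibniz_pow, hb2, hb8,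
      Nat.add_sub_cancel]
    simp only [smul_zero, mul_zero, zero_add, add_zero, smul_eq_mul, nsmul_eq_mul]
    push_cast
    linear_combination (b8 ^ n * ((m : djF) * b2 ^ (2*m) * h1 ^ 2)) * two_h1
  · intro h
    apply_fun djFquot at h
    simp only [map_mul, map_pow, map_zero, b2, b8, h1, djFquot,
      Ideal.Quotient.lift_mk, eval₂Hom_X'] at h
    have : (X 1 ^ (2*m) * X 2 ^ n * X 0 ^ 3 : MvPolynomial (Fin 3) (ZMod 2)) ≠ 0 :=
      mul_ne_zero (mul_ne_zero (pow_ne_zero _ (X_ne_zero _)) (pow_ne_zero _ (X_ne_zero _)))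
        (pow_ne_zero _ (X_ne_zero _))
    erw [Ideal.Quotient.lift_mk, Ideal.Quotient.lift_mk, Ideal.Quotient.lift_mk] at h
    simp only [eval₂Hom_X'] at h
    exact this h
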